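/- arXiv:1406.1107 — 2 statements merged into one kernel-verified Lean document; each statement's English description precedes it below -/
import Mathlib

section
/- For every positive integer k and every n ≥ 1, the function x ↦ |x|^{2k} on ℝⁿ satisfies (-Δ)^k |x|^{2k} = (-1)^k · 4^k · k! · (n/2)_k, a constant, where (q)_k = q(q+1)⋯(q+k-1) is the Pochhammer symbol. -/
open MeasureTheory

/-- The Laplacian of `f : ℝⁿ → ℝ` at `x`, as the sum of second partial derivatives. -/
noncomputable def lap {n : ℕ} (f : EuclideanSpace ℝ (Fin n) → ℝ)
    (x : EuclideanSpace ℝ (Fin n)) : ℝ :=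
  ∑ i : Fin n, fderiv ℝ (fun y => fderiv ℝ f y (EuclideanSpace.single i 1)) x
    (EuclideanSpace.single i 1)

/-- `(-Δ)^k`, the `k`-th iterate of the negative Laplacian. -/
noncomputable def negLapIter {n : ℕ} (k : ℕ) (f : EuclideanSpace ℝ (Fin n) → ℝ) :
    EuclideanSpace ℝ (Fin n) → ℝ :=
  (fun g x => -(lap g x))^[k] f

/-!
For a radial function `φ (‖x‖²)` the chain rule gives `Δ = 4 ‖x‖² φ'' + 2 n φ'`, so `-Δ` sends
`c ‖x‖^(2(m+1))` to `-2c (m+1)(2m+n) ‖x‖^(2m)`: each application lowers the degree by two and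
multiplies by an explicit factor. After `k` steps `‖x‖^(2k)` becomes the constant
`∏_{i<k} -2(i+1)(2i+n) = (-4)^k k! (n/2)_k`.
-/

open Finset

section

variable {n : ℕ}

theorem hasFDerivAt_comp_norm_sq {φ : ℝ → ℝ} {φ' : ℝ} {y : EuclideanSpace ℝ (Fin n)}
    (hφ : HasDerivAt φ φ' (‖y‖ ^ 2)) :
    HasFDerivAt (fun z : EuclideanSpace ℝ (Fin n) => φ (‖z‖ ^ 2)) (φ' • 2 • innerSL ℝ y) y :=
  hφ.comp_hasFDerivAt y (hasStrictFDerivAt_norm_sq y).hasFDerivAt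

theorem fderiv_comp_norm_sq_single {φ : ℝ → ℝ} {φ' : ℝ} {y : EuclideanSpace ℝ (Fin n)}
    (hφ : HasDerivAt φ φ' (‖y‖ ^ 2)) (i : Fin n) :
    fderiv ℝ (fun z : EuclideanSpace ℝ (Fin n) => φ (‖z‖ ^ 2)) y (EuclideanSpace.single i 1)
      = 2 * φ' * y i := by
  simp [(hasFDerivAt_comp_norm_sq hφ).fderiv, EuclideanSpace.inner_single_right]
  ring

theorem lap_comp_norm_sq {φ φ' : ℝ → ℝ} {φ'' : ℝ} {x : EuclideanSpace ℝ (Fin n)}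
    (hφ : ∀ r, HasDerivAt φ (φ' r) r) (hφ' : HasDerivAt φ' φ'' (‖x‖ ^ 2)) :
    lap (fun y => φ (‖y‖ ^ 2)) x = 4 * φ'' * ‖x‖ ^ 2 + 2 * n * φ' (‖x‖ ^ 2) := by
  have hsecond (i : Fin n) :
      fderiv ℝ (fun y : EuclideanSpace ℝ (Fin n) => 2 * φ' (‖y‖ ^ 2) * y i) x
        (EuclideanSpace.single i 1) = 4 * φ'' * x i ^ 2 + 2 * φ' (‖x‖ ^ 2) := by
    have hd : HasFDerivAt (fun y : EuclideanSpace ℝ (Fin n) => 2 * φ' (‖y‖ ^ 2) * y i) _ x :=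
      ((hasFDerivAt_comp_norm_sq hφ').const_mul 2).mul (EuclideanSpace.proj (𝕜 := ℝ) i).hasFDerivAt
    rw [hd.fderiv]
    simp [EuclideanSpace.inner_single_right]
    ring
  simp only [lap, fun y i => fderiv_comp_norm_sq_single (hφ (‖y‖ ^ 2)) i, hsecond,
    sum_add_distrib, ← mul_sum, ← EuclideanSpace.real_norm_sq_eq, sum_const, card_univ,
    Fintype.card_fin, nsmul_eq_mul]
  ring

theorem lap_const_mul_norm_sq_pow_succ (c : ℝ) (m : ℕ) (x : EuclideanSpace ℝ (Fin n)) :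
    lap (fun y => c * (‖y‖ ^ 2) ^ (m + 1)) x
      = c * (2 * (m + 1) * (2 * m + n)) * (‖x‖ ^ 2) ^ m := by
  have hφ (r : ℝ) : HasDerivAt (fun r => c * r ^ (m + 1)) (c * (m + 1) * r ^ m) r := by
    simpa [mul_assoc] using (hasDerivAt_pow (m + 1) r).const_mul c
  have hφ' : HasDerivAt (fun r => c * (m + 1) * r ^ m) (c * (m + 1) * (m * (‖x‖ ^ 2) ^ (m - 1)))
      (‖x‖ ^ 2) := (hasDerivAt_pow m _).const_mul _
  rw [lap_comp_norm_sq hφ hφ']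
  rcases m with _ | m
  · ring
  · rw [Nat.add_sub_cancel]
    push_cast
    ring

theorem negLapIter_norm_sq_pow (j m : ℕ) :
    negLapIter j (fun y : EuclideanSpace ℝ (Fin n) => (‖y‖ ^ 2) ^ (m + j))
      = fun x => (∏ i ∈ range j, -(2 * ((m + i + 1 : ℕ) : ℝ) * (2 * ((m + i : ℕ) : ℝ) + n)))
          * (‖x‖ ^ 2) ^ m := by
  induction j generalizing m with
  | zero => simp [negLapIter]
  | succ j ih =>
    funext x
    rw [negLapIter, Function.iterate_succ_apply', ← negLapIter, ← add_assoc, add_right_comm,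
      ih (m + 1), lap_const_mul_norm_sq_pow_succ, prod_range_succ']
    simp only [add_zero, add_right_comm m 1, add_assoc m _ 1]
    push_cast
    ring

end

theorem prod_range_four_mul_eq_ascPochhammer (k : ℕ) (q : ℝ) :
    ∏ i ∈ range k, (4 * (i + 1) * (q + i)) = 4 ^ k * k.factorial * (ascPochhammer ℝ k).eval q := by
  induction k with
  | zero => simp
  | succ k ih =>
    rw [prod_range_succ, ih, ascPochhammer_succ_eval, Nat.factorial_succ]
    push_cast
    ring

theorem stmt2_general {n : ℕ} (k : ℕ) (x : EuclideanSpace ℝ (Fin n)) :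
    negLapIter k (fun y => ‖y‖ ^ (2 * k)) x
      = (-1) ^ k * 4 ^ k * (k.factorial : ℝ)
        * (ascPochhammer ℝ k).eval ((n : ℝ) / 2) := by
  have h := congrFun (negLapIter_norm_sq_pow (n := n) k 0) x
  simp only [zero_add, pow_zero, mul_one, ← pow_mul, mul_comm 2 k] at h
  rw [mul_comm 2 k, h, prod_neg, card_range, mul_assoc, mul_assoc, ← mul_assoc (4 ^ k),
    ← prod_range_four_mul_eq_ascPochhammer]
  congr 1
  refine prod_congr rfl fun i _ => ?_
  push_cast
  ring

theorem stmt2 {n : ℕ} (hn : 1 ≤ n) (k : ℕ) (hk : 1 ≤ k) (x : EuclideanSpace ℝ (Fin n)) :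
    negLapIter k (fun y => ‖y‖ ^ (2 * k)) x
      = (-1) ^ k * 4 ^ k * (k.factorial : ℝ)
        * (ascPochhammer ℝ k).eval ((n : ℝ) / 2) :=
  stmt2_general k x
end

section
/- Fix ρ₀ > 0 and s ∈ (1,2), and for x ∈ (0, ρ₀/2) define J₁(x) = ∫_{1 - ρ₀/x}^{ρ₀/x - 1} (2 - (1+z)_+^s - (1-z)_+^s) / |z|^{1+s} dz, where t_+ = max(t, 0). Then lim_{x→0⁺} J₁(x) / log x = 2. -/
/-!
The integrand `F` of `J₁` is even, so `J₁(x) = 2 ∫₀^R F` with `R = ρ₀/x - 1`. By the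
second-order Bernoulli inequality `(1+z)^s ≤ 1 + s z + (s-1) z²` (valid for `1 ≤ s ≤ 2`), the
numerator of `F` is `O(z²)` near `0`, so `F = O(z^{1-s})` is integrable on `[0, 1]`. For `z ≥ 1`
the same inequality gives `F(z) = -1/z + O(z⁻²)`. Hence
`J₁(x) = C(R) - 2 log R` with `C(R)` convergent as `R → ∞`, and
`log R = log (ρ₀ - x) - log x`, so `J₁(x) / log x → 2`.
-/

open Filter intervalIntegral

noncomputable def J₁ (ρ₀ s x : ℝ) : ℝ :=
  ∫ z in (1 - ρ₀ / x)..(ρ₀ / x - 1),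
    (2 - max (1 + z) 0 ^ s - max (1 - z) 0 ^ s) / |z| ^ (1 + s)

open Real MeasureTheory Set Topology

theorem intervalIntegral.integral_neg_self_eq_two_smul_of_even {E : Type*}
    [NormedAddCommGroup E] [NormedSpace ℝ E] {f : ℝ → E} (hf : f.Even) {a : ℝ}
    (ha : IntervalIntegrable f volume 0 a) :
    ∫ z in (-a)..a, f z = (2 : ℝ) • ∫ z in (0 : ℝ)..a, f z := by
  have hneg : IntervalIntegrable f volume (-a) 0 := by
    simpa [hf.eq] using (IntervalIntegrable.iff_comp_neg (f := f)).mp ha.symm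
  rw [← integral_add_adjacent_intervals hneg ha, two_smul]
  congr 1
  simpa [hf.eq] using (integral_comp_neg (a := 0) (b := a) f).symm

theorem one_add_rpow_le_of_le_two {s z : ℝ} (hz : -1 ≤ z) (hs1 : 1 ≤ s) (hs2 : s ≤ 2) :
    (1 + z) ^ s ≤ 1 + s * z + (s - 1) * z ^ 2 := by
  have hbern := rpow_one_add_le_one_add_mul_self hz (sub_nonneg.2 hs1) (by linarith)
  calc (1 + z) ^ s = (1 + z) * (1 + z) ^ (s - 1) := by
        rw [← rpow_one_add' (by linarith) (by linarith), add_sub_cancel]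
    _ ≤ (1 + z) * (1 + (s - 1) * z) := mul_le_mul_of_nonneg_left hbern (by linarith)
    _ = 1 + s * z + (s - 1) * z ^ 2 := by ring

theorem abs_two_sub_one_add_rpow_sub_one_sub_rpow_le {s z : ℝ} (hz : |z| ≤ 1) (hs1 : 1 ≤ s)
    (hs2 : s ≤ 2) : |2 - (1 + z) ^ s - (1 - z) ^ s| ≤ 2 * z ^ 2 := by
  obtain ⟨hz1, hz2⟩ := abs_le.1 hz
  have hneg : -1 ≤ -z := by linarith
  have lo₁ := one_add_mul_self_le_rpow_one_add hz1 hs1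
  have lo₂ := one_add_mul_self_le_rpow_one_add hneg hs1
  have up₁ := one_add_rpow_le_of_le_two hz1 hs1 hs2
  have up₂ := one_add_rpow_le_of_le_two hneg hs1 hs2
  rw [← sub_eq_add_neg] at lo₂ up₂
  rw [abs_le]
  constructor <;> nlinarith [sq_nonneg z]

theorem one_add_rpow_sub_rpow_le {s z : ℝ} (hz : 1 ≤ z) (hs1 : 1 ≤ s) (hs2 : s ≤ 2) :
    (1 + z) ^ s - z ^ s ≤ 3 * z ^ (s - 1) := by
  have hz0 : 0 < z := by linarith
  have hu0 : 0 ≤ z⁻¹ := inv_nonneg.2 hz0.le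
  have hu1 : z⁻¹ ≤ 1 := inv_le_one_of_one_le₀ hz
  have hbound : (1 + z⁻¹) ^ s ≤ 1 + 3 * z⁻¹ := by
    have := one_add_rpow_le_of_le_two (by linarith : -1 ≤ z⁻¹) hs1 hs2
    nlinarith
  have hsplit : (1 + z) ^ s = z ^ s * (1 + z⁻¹) ^ s := by
    rw [← mul_rpow hz0.le (by positivity), mul_add, mul_inv_cancel₀ hz0.ne', mul_one, add_comm]
  have hzs : z ^ s * z⁻¹ = z ^ (s - 1) := by
    rw [rpow_sub_one hz0.ne', div_eq_mul_inv]
  calc (1 + z) ^ s - z ^ s ≤ z ^ s * (1 + 3 * z⁻¹) - z ^ s := by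
        rw [hsplit]; gcongr
    _ = 3 * z ^ (s - 1) := by rw [← hzs]; ring

noncomputable def J₁Integrand (s z : ℝ) : ℝ :=
  (2 - max (1 + z) 0 ^ s - max (1 - z) 0 ^ s) / |z| ^ (1 + s)

namespace J₁Integrand

variable {s : ℝ}

theorem even (s : ℝ) : (J₁Integrand s).Even := fun z => by
  simp only [J₁Integrand, abs_neg, sub_neg_eq_add, ← sub_eq_add_neg]
  ring

theorem continuousOn (hs : 0 ≤ s) : ContinuousOn (J₁Integrand s) {0}ᶜ :=
  ContinuousOn.div (by fun_prop (disch := linarith)) (by fun_prop (disch := linarith))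
    fun _ hz => (rpow_pos_of_pos (abs_pos.2 hz) _).ne'

theorem eq_of_mem_Ioc {z : ℝ} (hz : z ∈ Ioc 0 1) :
    J₁Integrand s z = (2 - (1 + z) ^ s - (1 - z) ^ s) / z ^ (1 + s) := by
  rw [J₁Integrand, max_eq_left (by linarith [hz.1]), max_eq_left (by linarith [hz.2]),
    abs_of_pos hz.1]

theorem eq_of_one_le (hs : 0 < s) {z : ℝ} (hz : 1 ≤ z) :
    J₁Integrand s z = (2 - (1 + z) ^ s) / z ^ (1 + s) := by
  rw [J₁Integrand, max_eq_left (by linarith), max_eq_right (by linarith), zero_rpow hs.ne',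
    sub_zero, abs_of_pos (by linarith)]

theorem abs_le_of_mem_Ioc (hs : s ∈ Icc 1 2) {z : ℝ} (hz : z ∈ Ioc 0 1) :
    |J₁Integrand s z| ≤ 2 * z ^ (1 - s) := by
  have hz0 := hz.1
  have hnum := abs_two_sub_one_add_rpow_sub_one_sub_rpow_le
    (abs_le.2 ⟨by linarith, hz.2⟩) hs.1 hs.2
  calc |J₁Integrand s z| ≤ 2 * z ^ 2 / z ^ (1 + s) := by
        rw [eq_of_mem_Ioc hz, abs_div, abs_of_pos (rpow_pos_of_pos hz0 _)]
        gcongr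
    _ = 2 * z ^ (1 - s) := by
        rw [mul_div_assoc, ← rpow_two, ← rpow_sub hz0]
        ring_nf

theorem intervalIntegrable_zero_one (hs : s ∈ Ico 1 2) :
    IntervalIntegrable (J₁Integrand s) volume 0 1 := by
  refine ((intervalIntegrable_rpow' (by linarith [hs.2] : -1 < 1 - s)).const_mul 2).mono_fun'
    ?_ ?_
  · exact ((continuousOn (by linarith [hs.1])).mono fun z hz => ne_of_gt (by simpa using hz.1))
      |>.aestronglyMeasurable measurableSet_uIoc
  · rw [uIoc_of_le zero_le_one]
    filter_upwards [ae_restrict_mem measurableSet_Ioc] with z hz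
    exact abs_le_of_mem_Ioc (Ico_subset_Icc_self hs) hz

theorem abs_add_inv_le (hs : s ∈ Icc 1 2) {z : ℝ} (hz : 1 ≤ z) :
    |J₁Integrand s z + z⁻¹| ≤ 5 * z ^ (-2 : ℝ) := by
  have hz0 : 0 < z := by linarith
  have hzs : 0 < z ^ (1 + s) := rpow_pos_of_pos hz0 _
  have hinv : z⁻¹ = z ^ s / z ^ (1 + s) := by
    rw [rpow_add hz0, rpow_one]; field_simp
  have hmono : z ^ s ≤ (1 + z) ^ s := rpow_le_rpow hz0.le (by linarith) (by linarith [hs.1])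
  have hone : 1 ≤ z ^ (s - 1) := one_le_rpow hz (by linarith [hs.1])
  have hdiff := one_add_rpow_sub_rpow_le hz hs.1 hs.2
  have hnum : |2 - (1 + z) ^ s + z ^ s| ≤ 5 * z ^ (s - 1) := by
    rw [abs_le]; constructor <;> linarith
  calc |J₁Integrand s z + z⁻¹| = |2 - (1 + z) ^ s + z ^ s| / z ^ (1 + s) := by
        rw [eq_of_one_le (by linarith [hs.1]) hz, hinv, ← add_div, abs_div, abs_of_pos hzs]
    _ ≤ 5 * z ^ (s - 1) / z ^ (1 + s) := by gcongr
    _ = 5 * z ^ (-2 : ℝ) := by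
        rw [mul_div_assoc, ← rpow_sub hz0]
        ring_nf

theorem integrableOn_add_inv_Ioi (hs : s ∈ Icc 1 2) :
    IntegrableOn (fun z => J₁Integrand s z + z⁻¹) (Ioi 1) := by
  refine ((integrableOn_Ioi_rpow_of_lt (a := -2) (by norm_num) one_pos).const_mul 5).mono' ?_ ?_
  · refine ContinuousOn.aestronglyMeasurable ?_ measurableSet_Ioi
    have hne : Ioi (1 : ℝ) ⊆ {0}ᶜ := fun z hz => ne_of_gt (one_pos.trans hz)
    exact ((continuousOn (by linarith [hs.1])).mono hne).add (continuousOn_inv₀.mono hne)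
  · filter_upwards [ae_restrict_mem measurableSet_Ioi] with z hz
    exact abs_add_inv_le hs (le_of_lt hz)

theorem integral_neg_self (hs : s ∈ Ico 1 2) {R : ℝ} (hR : 1 ≤ R) :
    ∫ z in (-R)..R, J₁Integrand s z
      = 2 * ((∫ z in (0 : ℝ)..1, J₁Integrand s z) + ∫ z in (1 : ℝ)..R, (J₁Integrand s z + z⁻¹))
        - 2 * log R := by
  have hne : uIcc 1 R ⊆ {0}ᶜ := fun z hz => ne_of_gt (by linarith [(uIcc_of_le hR ▸ hz).1])
  have h01 := intervalIntegrable_zero_one hs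
  have h1R : IntervalIntegrable (J₁Integrand s) volume 1 R :=
    ((continuousOn (by linarith [hs.1])).mono hne).intervalIntegrable
  have hinv : IntervalIntegrable (fun z : ℝ => z⁻¹) volume 1 R :=
    (continuousOn_inv₀.mono hne).intervalIntegrable
  rw [integral_neg_self_eq_two_smul_of_even (even s) (h01.trans h1R), smul_eq_mul,
    ← integral_add_adjacent_intervals h01 h1R, integral_add h1R hinv,
    integral_inv_of_pos one_pos (by linarith), div_one]
  ring

end J₁Integrand

theorem J₁_eq {ρ₀ s x : ℝ} (hs : s ∈ Ico 1 2) (hx : x ∈ Ioo 0 (ρ₀ / 2)) :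
    J₁ ρ₀ s x = 2 * ((∫ z in (0 : ℝ)..1, J₁Integrand s z)
        + ∫ z in (1 : ℝ)..(ρ₀ / x - 1), (J₁Integrand s z + z⁻¹))
      - 2 * log (ρ₀ - x) + 2 * log x := by
  obtain ⟨hx0, hxρ⟩ := hx
  have hR : 1 ≤ ρ₀ / x - 1 := by rw [le_sub_iff_add_le, le_div_iff₀ hx0]; linarith
  have hlogR : log (ρ₀ / x - 1) = log (ρ₀ - x) - log x := by
    rw [← log_div (by linarith) hx0.ne', sub_div, div_self hx0.ne']
  have hJ : J₁ ρ₀ s x = ∫ z in (-(ρ₀ / x - 1))..(ρ₀ / x - 1), J₁Integrand s z := by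
    rw [neg_sub]; rfl
  rw [hJ, J₁Integrand.integral_neg_self hs hR, hlogR]
  ring

theorem stmt8 (ρ₀ s : ℝ) (hρ₀ : 0 < ρ₀) (hs : s ∈ Set.Ioo (1 : ℝ) 2) :
    Tendsto (fun x => J₁ ρ₀ s x / Real.log x)
      (nhdsWithin 0 (Set.Ioo 0 (ρ₀ / 2))) (nhds 2) := by
  set l := 𝓝[Ioo 0 (ρ₀ / 2)] (0 : ℝ)
  have hl : l ≤ 𝓝[>] 0 := nhdsWithin_mono _ Ioo_subset_Ioi_self
  have hlog : Tendsto log l atBot := tendsto_log_nhdsGT_zero.mono_left hl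
  have hR : Tendsto (fun x => ρ₀ / x - 1) l atTop :=
    tendsto_atTop_add_const_right _ _ ((tendsto_inv_nhdsGT_zero.const_mul_atTop hρ₀).mono_left hl)
  have hlogρ : Tendsto (fun x => log (ρ₀ - x)) l (𝓝 (log ρ₀)) := by
    simpa using ((continuousAt_const.sub continuousAt_id).log (by simpa using hρ₀.ne')).tendsto
      |>.mono_left (nhdsWithin_le_nhds (a := (0 : ℝ)))
  have hrest := ((((intervalIntegral_tendsto_integral_Ioi 1
    (J₁Integrand.integrableOn_add_inv_Ioi (Ioo_subset_Icc_self hs)) hR).const_add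
    (∫ z in (0 : ℝ)..1, J₁Integrand s z)).const_mul 2).sub (hlogρ.const_mul 2)).div_atBot hlog
  have hlim := hrest.const_add 2
  rw [add_zero] at hlim
  refine hlim.congr' ?_
  filter_upwards [self_mem_nhdsWithin, hlog.eventually (eventually_lt_atBot 0)] with x hx hlogx
  rw [J₁_eq (Ioo_subset_Ico_self hs) hx]
  field_simp [hlogx.ne]
  ring
end
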